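/- arXiv:1411.0947 — 2 statements merged into one kernel-verified Lean document; each statement's English description precedes it below -/
import Mathlib

section
/- Let I be a symmetric positive definite d×d real matrix written in block form I = [[G₁, G₂],[ᵗG₂, G₃]] with G₁ of size r×r (1 ≤ r ≤ d) and G₃ of size (d−r)×(d−r) (which is then symmetric positive definite, hence invertible), let H = [[0, 0],[0, G₃^{−1}]], and let I^{1/2} denote the symmetric positive definite square root of I. Then the matrix Q = I^{1/2} (I^{−1} − H) I^{1/2} is symmetric and idempotent (Q² = Q) and has trace equal to r; equivalently, Q is an orthogonal projection matrix of rank r. -/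
open Matrix

section

open scoped ComplexOrder

/-- The square root of a positive semidefinite matrix, as Mathlib (December 2024) defined it;
Mathlib no longer has `Matrix.PosSemidef.sqrt`. -/
noncomputable def Matrix.PosSemidef.sqrt {n 𝕜 : Type*} [Fintype n] [RCLike 𝕜] [DecidableEq n]
    {A : Matrix n n 𝕜} (hA : A.PosSemidef) : Matrix n n 𝕜 :=
  (hA.1.eigenvectorUnitary : Matrix n n 𝕜) * diagonal (((↑) : ℝ → 𝕜) ∘ Real.sqrt ∘ hA.1.eigenvalues) *
    (star hA.1.eigenvectorUnitary : Matrix n n 𝕜)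

end

/-!
Write `S = I^{1/2}` and `P = I⁻¹ - H`, so `Q = S P S` with `S² = I`. Multiplying `I` by `H` on the
right kills the first block column and turns the second into `[G₂ G₃⁻¹; 1]`, whence `H I H = H` and
`tr (I H) = s`. The first identity gives `P I P = P`, hence `Q² = S P S² P S = S P S`; the second gives
`tr Q = tr (I P) = tr 1 - tr (I H) = r`. Symmetry of `Q` is inherited from `S`, `I⁻¹` and `H`.
-/

theorem sub_mul_mul_sub_eq_self {R : Type*} [Ring R] {a b h : R} (hba : b * a = 1)
    (hab : a * b = 1) (hh : h * a * h = h) : (b - h) * a * (b - h) = b - h := by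
  rw [sub_mul, sub_mul, hba, one_mul, mul_sub, hh, mul_assoc h, hab, mul_one]
  abel

theorem isIdempotentElem_mul_mul_of_mul_self_eq {R : Type*} [Semigroup R] {a s p : R}
    (hs : s * s = a) (hp : p * a * p = p) : IsIdempotentElem (s * p * s) := by
  calc s * p * s * (s * p * s) = s * (p * (s * s) * p) * s := by simp only [mul_assoc]
    _ = s * p * s := by rw [hs, hp, mul_assoc]

namespace Matrix

section Sqrt

open scoped ComplexOrder

variable {n 𝕜 : Type*} [Fintype n] [RCLike 𝕜] [DecidableEq n] {A : Matrix n n 𝕜}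

theorem PosSemidef.sqrt_mul_sqrt (hA : A.PosSemidef) : hA.sqrt * hA.sqrt = A := by
  conv_rhs => rw [hA.1.spectral_theorem, Unitary.conjStarAlgAut_apply]
  rw [PosSemidef.sqrt]
  simp only [mul_assoc]
  rw [← mul_assoc (star _), Unitary.coe_star_mul_self, one_mul, ← mul_assoc (diagonal _),
    diagonal_mul_diagonal]
  congr 3
  funext i
  simp only [Function.comp_apply, ← RCLike.ofReal_mul, Real.mul_self_sqrt (hA.eigenvalues_nonneg i)]

theorem PosSemidef.isHermitian_sqrt (hA : A.PosSemidef) : hA.sqrt.IsHermitian := by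
  rw [PosSemidef.sqrt]
  simp [IsHermitian, star_eq_conjTranspose, mul_assoc, Pi.star_def, Function.comp_def]

theorem PosSemidef.isHermitian_sqrt_mul_mul (hA : A.PosSemidef) {P : Matrix n n 𝕜}
    (hP : P.IsHermitian) : (hA.sqrt * P * hA.sqrt).IsHermitian := by
  simpa only [hA.isHermitian_sqrt.eq] using isHermitian_conjTranspose_mul_mul hA.sqrt hP

theorem PosSemidef.trace_sqrt_mul_mul (hA : A.PosSemidef) (P : Matrix n n 𝕜) :
    (hA.sqrt * P * hA.sqrt).trace = (A * P).trace := by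
  rw [trace_mul_cycle, hA.sqrt_mul_sqrt]

end Sqrt

section Blocks

variable {m n α : Type*}

theorem PosDef.of_fromBlocks₂₂ {R : Type*} [CommRing R] [PartialOrder R] [StarRing R]
    {A : Matrix m m R} {B : Matrix m n R} {C : Matrix n m R} {D : Matrix n n R}
    (h : (fromBlocks A B C D).PosDef) : D.PosDef :=
  h.submatrix Sum.inr_injective

variable [Fintype m] [Fintype n]

theorem trace_fromBlocks [AddCommMonoid α] (A : Matrix m m α) (B : Matrix m n α)
    (C : Matrix n m α) (D : Matrix n n α) : (fromBlocks A B C D).trace = A.trace + D.trace := by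
  simp [trace, Fintype.sum_sum_type]

variable [DecidableEq n] [CommRing α]

theorem fromBlocks_mul_fromBlocks_zero_inv (A : Matrix m m α) (B : Matrix m n α)
    (C : Matrix n m α) {D : Matrix n n α} (hD : IsUnit D.det) :
    fromBlocks A B C D * fromBlocks 0 0 0 D⁻¹ = fromBlocks 0 (B * D⁻¹) 0 1 := by
  simp [fromBlocks_multiply, mul_nonsing_inv D hD]

theorem fromBlocks_zero_inv_mul_mul_self [DecidableEq m] (A : Matrix m m α) (B : Matrix m n α)
    (C : Matrix n m α) {D : Matrix n n α} (hD : IsUnit D.det) :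
    fromBlocks 0 0 0 D⁻¹ * fromBlocks A B C D * fromBlocks 0 0 0 D⁻¹ =
      (fromBlocks 0 0 0 D⁻¹ : Matrix (m ⊕ n) (m ⊕ n) α) := by
  rw [mul_assoc, fromBlocks_mul_fromBlocks_zero_inv A B C hD]
  simp [fromBlocks_multiply]

end Blocks

end Matrix

theorem sqrt_quadratic_form_is_projection_general {r s : ℕ}
    (G₁ : Matrix (Fin r) (Fin r) ℝ) (G₂ : Matrix (Fin r) (Fin s) ℝ)
    (G₃ : Matrix (Fin s) (Fin s) ℝ)
    (I : Matrix (Fin r ⊕ Fin s) (Fin r ⊕ Fin s) ℝ)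
    (hI : I = Matrix.fromBlocks G₁ G₂ G₂ᵀ G₃)
    (hIpd : I.PosDef)
    (H : Matrix (Fin r ⊕ Fin s) (Fin r ⊕ Fin s) ℝ)
    (hH : H = Matrix.fromBlocks 0 0 0 G₃⁻¹)
    (Q : Matrix (Fin r ⊕ Fin s) (Fin r ⊕ Fin s) ℝ)
    (hQ : Q = hIpd.posSemidef.sqrt * (I⁻¹ - H) * hIpd.posSemidef.sqrt) :
    Q.IsSymm ∧ Q * Q = Q ∧ Q.trace = (r : ℝ) := by
  have hG₃ : G₃.PosDef := (hI ▸ hIpd).of_fromBlocks₂₂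
  have hG₃det : IsUnit G₃.det := hG₃.det_pos.ne'.isUnit
  have hIdet : IsUnit I.det := hIpd.det_pos.ne'.isUnit
  have hH_herm : H.IsHermitian :=
    hH ▸ isHermitian_zero.fromBlocks (by simp) hG₃.isHermitian.inv
  have hHIH : H * I * H = H := by
    rw [hH, hI]
    exact fromBlocks_zero_inv_mul_mul_self _ _ _ hG₃det
  have hIH_trace : (I * H).trace = s := by
    rw [hI, hH, fromBlocks_mul_fromBlocks_zero_inv _ _ _ hG₃det, trace_fromBlocks]
    simp
  refine ⟨?_, ?_, ?_⟩
  · rw [hQ, ← isHermitian_iff_isSymm]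
    exact hIpd.posSemidef.isHermitian_sqrt_mul_mul (hIpd.isHermitian.inv.sub hH_herm)
  · rw [hQ]
    exact isIdempotentElem_mul_mul_of_mul_self_eq hIpd.posSemidef.sqrt_mul_sqrt
      (sub_mul_mul_sub_eq_self (nonsing_inv_mul I hIdet) (mul_nonsing_inv I hIdet) hHIH)
  · rw [hQ, hIpd.posSemidef.trace_sqrt_mul_mul, mul_sub, mul_nonsing_inv I hIdet, trace_sub,
      trace_one, hIH_trace]
    simp

/-- For a symmetric positive definite `d × d` matrix `I` in block form
`[[G₁, G₂], [ᵗG₂, G₃]]` (with `G₁` of size `r × r`, `1 ≤ r`), `H = [[0, 0], [0, G₃⁻¹]]`,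
and `I^{1/2}` the positive semidefinite square root of `I`, the matrix
`Q = I^{1/2} (I⁻¹ - H) I^{1/2}` is symmetric, idempotent, and has trace `r`. -/
theorem sqrt_quadratic_form_is_projection {r s : ℕ} (hr : 1 ≤ r)
    (G₁ : Matrix (Fin r) (Fin r) ℝ) (G₂ : Matrix (Fin r) (Fin s) ℝ)
    (G₃ : Matrix (Fin s) (Fin s) ℝ)
    (I : Matrix (Fin r ⊕ Fin s) (Fin r ⊕ Fin s) ℝ)
    (hI : I = Matrix.fromBlocks G₁ G₂ G₂ᵀ G₃)
    (hIpd : I.PosDef)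
    (H : Matrix (Fin r ⊕ Fin s) (Fin r ⊕ Fin s) ℝ)
    (hH : H = Matrix.fromBlocks 0 0 0 G₃⁻¹)
    (Q : Matrix (Fin r ⊕ Fin s) (Fin r ⊕ Fin s) ℝ)
    (hQ : Q = hIpd.posSemidef.sqrt * (I⁻¹ - H) * hIpd.posSemidef.sqrt) :
    Q.IsSymm ∧ Q * Q = Q ∧ Q.trace = (r : ℝ) :=
  sqrt_quadratic_form_is_projection_general G₁ G₂ G₃ I hI hIpd H hH Q hQ
end

section
/- Let Q be a d×d real symmetric idempotent matrix of rank r (1 ≤ r ≤ d), let M ≥ 1, and let (Z_1,…,Z_M) be an Md-dimensional centered Gaussian random vector whose d×d covariance blocks satisfy Cov(Z_i, Z_j) = ρ_{ij} · Id_{d×d} for a symmetric positive semidefinite M×M matrix (ρ_{ij}) with ρ_{ii} = 1. Then the joint law of the M-dimensional random vector (ᵗZ_1 Q Z_1, ᵗZ_2 Q Z_2, …, ᵗZ_M Q Z_M) equals the joint law of ( ∑_{h=1}^{r} ξ_{h;1}², …, ∑_{h=1}^{r} ξ_{h;M}² ), where (ξ_{h;i})_{1≤h≤r, 1≤i≤M}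 is a centered jointly Gaussian family with ξ_{h;i} ~ N(0,1) for all h, i, Cov(ξ_{h;i}, ξ_{l;j}) = 0 for h ≠ l, and Cov(ξ_{h;i}, ξ_{h;j}) = ρ_{ij} for all h. -/
open MeasureTheory Matrix Finset

/-!
An orthonormal basis `u₁, …, u_r` of the range of `Q`, taken as the rows of an `r × d` matrix `U`,
gives `U Uᵀ = 1` and `Q = Uᵀ U`, so `ᵗZ_i Q Z_i = ∑_h (U Z_i)_h²`. Put `ξ_{h;i} := (U Z_i)_h`.
This linear image of `Z` is again Gaussian: pairing `ξ` with `a` is pairing `Z` with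
`b_i := Uᵀ a_i`, and `U Uᵀ = 1` gives `⟨b_i, b_j⟩ = ∑_h a_{h;i} a_{h;j}`, which is the covariance
`ρ_{ij} δ_{hl}`.
-/

theorem Matrix.exists_conjTranspose_mul_self_eq_of_isStarProjection {𝕜 n : Type*} [RCLike 𝕜]
    [Fintype n] [DecidableEq n] {Q : Matrix n n 𝕜} (hQ : IsStarProjection Q) :
    ∃ U : Matrix (Fin Q.rank) n 𝕜, U * Uᴴ = 1 ∧ Uᴴ * U = Q := by
  obtain ⟨_, hP⟩ := isStarProjection_iff_eq_starProjection_range.mp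
    (hQ.map (toEuclideanCLM (n := n) (𝕜 := 𝕜)))
  set K := (toEuclideanCLM (n := n) (𝕜 := 𝕜) Q :
    EuclideanSpace 𝕜 n →ₗ[𝕜] EuclideanSpace 𝕜 n).range
  have hrank : Module.finrank 𝕜 K = Q.rank := by
    rw [rank_eq_finrank_range_toLin Q (EuclideanSpace.basisFun n 𝕜).toBasis
      (EuclideanSpace.basisFun n 𝕜).toBasis, ← toEuclideanLin_eq_toLin_orthonormal]
    rfl
  let b := (stdOrthonormalBasis 𝕜 K).reindex (finCongr hrank)
  refine ⟨of fun h k => star ((b h : EuclideanSpace 𝕜 n) k), ?_, ?_⟩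
  · ext h l
    simpa [mul_apply, one_apply, EuclideanSpace.inner_eq_star_dotProduct, dotProduct, mul_comm]
      using orthonormal_iff_ite.mp b.orthonormal h l
  · ext k l
    have hcol : toEuclideanCLM (n := n) (𝕜 := 𝕜) Q (EuclideanSpace.single l 1) =
        ∑ h, inner 𝕜 (b h : EuclideanSpace 𝕜 n) (EuclideanSpace.single l 1) • (b h : _) := by
      rw [hP, b.starProjection_eq_sum_rankOne]
      simp
    simpa [mul_apply, EuclideanSpace.inner_single_right, mul_comm]
      using (congrArg (· k) hcol).symm

theorem Matrix.transpose_mulVec_dotProduct_transpose_mulVec {R m n : Type*} [CommSemiring R]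
    [Fintype m] [Fintype n] [DecidableEq m] {U : Matrix m n R} (hU : U * Uᵀ = 1)
    (v w : m → R) : Uᵀ *ᵥ v ⬝ᵥ Uᵀ *ᵥ w = v ⬝ᵥ w := by
  rw [dotProduct_transpose_mulVec, mulVec_mulVec, hU, one_mulVec, dotProduct_comm]

section BlockGaussian

variable {ι m n : Type*} [Fintype ι] [Fintype m] [Fintype n]

theorem integral_cexp_map_mulVec_blocks (U : Matrix m n ℝ) (μ : Measure (ι → n → ℝ))
    (a : m → ι → ℝ) :
    ∫ ξ, Complex.exp (Complex.I * (∑ h, ∑ i, a h i * ξ h i : ℝ))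
        ∂μ.map (fun z h i => (U *ᵥ z i) h) =
      ∫ z, Complex.exp (Complex.I * (∑ i, ∑ k, (Uᵀ *ᵥ fun h => a h i) k * z i k : ℝ)) ∂μ := by
  have hpair : ∀ z : ι → n → ℝ,
      ∑ h, ∑ i, a h i * (U *ᵥ z i) h = ∑ i, ∑ k, (Uᵀ *ᵥ fun h => a h i) k * z i k := by
    intro z
    rw [sum_comm]
    refine sum_congr rfl fun i _ => ?_
    simpa only [mulVec_transpose, dotProduct] using dotProduct_mulVec (fun h => a h i) U (z i)
  have hU : Continuous fun (z : ι → n → ℝ) h i => (U *ᵥ z i) h := by fun_prop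
  rw [integral_map hU.aemeasurable (Continuous.aestronglyMeasurable (by fun_prop))]
  simp_rw [hpair]

theorem integral_cexp_map_mulVec_blocks_of_gaussian [DecidableEq m] {U : Matrix m n ℝ}
    (hU : U * Uᵀ = 1) {ρ : Matrix ι ι ℝ} {μ : Measure (ι → n → ℝ)}
    (hμ : ∀ a : ι → n → ℝ,
      ∫ z, Complex.exp (Complex.I * (∑ i, ∑ k, a i k * z i k : ℝ)) ∂μ =
        Complex.exp (-(1 / 2 : ℂ) * ((∑ i, ∑ j, ρ i j * ∑ k, a i k * a j k : ℝ) : ℂ)))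
    (a : m → ι → ℝ) :
    ∫ ξ, Complex.exp (Complex.I * (∑ h, ∑ i, a h i * ξ h i : ℝ))
        ∂μ.map (fun z h i => (U *ᵥ z i) h) =
      Complex.exp (-(1 / 2 : ℂ) * ((∑ h, ∑ i, ∑ j, ρ i j * a h i * a h j : ℝ) : ℂ)) := by
  have hcov : ∀ i j, ∑ k, (Uᵀ *ᵥ fun h => a h i) k * (Uᵀ *ᵥ fun h => a h j) k =
      ∑ h, a h i * a h j :=
    fun i j => transpose_mulVec_dotProduct_transpose_mulVec hU _ _
  rw [integral_cexp_map_mulVec_blocks, hμ]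
  congr 3
  calc ∑ i, ∑ j, ρ i j * ∑ k, (Uᵀ *ᵥ fun h => a h i) k * (Uᵀ *ᵥ fun h => a h j) k
      = ∑ i, ∑ j, ∑ h, ρ i j * a h i * a h j := by simp_rw [hcov, mul_sum, mul_assoc]
    _ = ∑ i, ∑ h, ∑ j, ρ i j * a h i * a h j := sum_congr rfl fun i _ => sum_comm
    _ = ∑ h, ∑ i, ∑ j, ρ i j * a h i * a h j := sum_comm

end BlockGaussian

theorem gaussian_quadratic_forms_law_general
    (d r M : ℕ)
    (Q : Matrix (Fin d) (Fin d) ℝ)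
    (hQsymm : Q.IsSymm) (hQidem : Q * Q = Q) (hQrank : Q.rank = r)
    (ρ : Matrix (Fin M) (Fin M) ℝ)
    (μZ : Measure (Fin M → Fin d → ℝ)) [IsProbabilityMeasure μZ]
    (hμZ : ∀ a : Fin M → Fin d → ℝ,
      ∫ z, Complex.exp (Complex.I * (∑ i, ∑ k, a i k * z i k : ℝ)) ∂μZ =
        Complex.exp (-(1 / 2 : ℂ) *
          ((∑ i, ∑ j, ρ i j * ∑ k, a i k * a j k : ℝ) : ℂ))) :
    ∃ μξ : Measure (Fin r → Fin M → ℝ), IsProbabilityMeasure μξ ∧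
      (∀ a : Fin r → Fin M → ℝ,
        ∫ ξ, Complex.exp (Complex.I * (∑ h, ∑ i, a h i * ξ h i : ℝ)) ∂μξ =
          Complex.exp (-(1 / 2 : ℂ) *
            ((∑ h, ∑ i, ∑ j, ρ i j * a h i * a h j : ℝ) : ℂ))) ∧
      Measure.map (fun z (i : Fin M) => z i ⬝ᵥ Q.mulVec (z i)) μZ =
        Measure.map (fun ξ (i : Fin M) => ∑ h, (ξ h i) ^ 2) μξ := by
  subst hQrank
  -- over `ℝ`, `star Q = Qᴴ` unfolds to `Qᵀ`, so `hQsymm` is already self-adjointness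
  obtain ⟨U, hUU, hUQ⟩ := exists_conjTranspose_mul_self_eq_of_isStarProjection ⟨hQidem, hQsymm⟩
  rw [conjTranspose_eq_transpose_of_trivial] at hUU hUQ
  have hquad : ∀ x : Fin d → ℝ, x ⬝ᵥ Q *ᵥ x = ∑ h, (U *ᵥ x) h ^ 2 := fun x => by
    simpa only [mulVec_mulVec, hUQ, dotProduct, sq] using dotProduct_transpose_mulVec U x (U *ᵥ x)
  have hL : Measurable fun (z : Fin M → Fin d → ℝ) h i => (U *ᵥ z i) h :=
    (by fun_prop : Continuous _).measurable
  refine ⟨μZ.map fun z h i => (U *ᵥ z i) h, Measure.isProbabilityMeasure_map hL.aemeasurable,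
    integral_cexp_map_mulVec_blocks_of_gaussian hUU hμZ, ?_⟩
  rw [Measure.map_map (by fun_prop) hL]
  congr 1
  ext z i
  exact hquad (z i)

/-- Let `Q` be a `d × d` real symmetric idempotent matrix of rank `r`, and
let `(Z_1, …, Z_M)` be a centered `Md`-dimensional Gaussian vector (given by its law `μZ`,
characterized through its characteristic function) with covariance blocks
`Cov(Z_i, Z_j) = ρ i j • Id`, where `(ρ i j)` is symmetric positive semidefinite with unit
diagonal. Then the law of `(ᵗZ_1 Q Z_1, …, ᵗZ_M Q Z_M)` equals the law of
`(∑_{h<r} ξ_{h;1}², …, ∑_{h<r} ξ_{h;M}²)` for a centered jointly Gaussian family `ξ` with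
`ξ_{h;i} ~ N(0,1)`, `Cov(ξ_{h;i}, ξ_{l;j}) = 0` for `h ≠ l` and
`Cov(ξ_{h;i}, ξ_{h;j}) = ρ i j`. -/
theorem gaussian_quadratic_forms_law
    (d r M : ℕ) (hr1 : 1 ≤ r) (hrd : r ≤ d) (hM : 1 ≤ M)
    (Q : Matrix (Fin d) (Fin d) ℝ)
    (hQsymm : Q.IsSymm) (hQidem : Q * Q = Q) (hQrank : Q.rank = r)
    (ρ : Matrix (Fin M) (Fin M) ℝ)
    (hρpsd : ρ.PosSemidef) (hρdiag : ∀ i, ρ i i = 1)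
    (μZ : Measure (Fin M → Fin d → ℝ)) [IsProbabilityMeasure μZ]
    (hμZ : ∀ a : Fin M → Fin d → ℝ,
      ∫ z, Complex.exp (Complex.I * (∑ i, ∑ k, a i k * z i k : ℝ)) ∂μZ =
        Complex.exp (-(1 / 2 : ℂ) *
          ((∑ i, ∑ j, ρ i j * ∑ k, a i k * a j k : ℝ) : ℂ))) :
    ∃ μξ : Measure (Fin r → Fin M → ℝ), IsProbabilityMeasure μξ ∧
      (∀ a : Fin r → Fin M → ℝ,
        ∫ ξ, Complex.exp (Complex.I * (∑ h, ∑ i, a h i * ξ h i : ℝ)) ∂μξ =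
          Complex.exp (-(1 / 2 : ℂ) *
            ((∑ h, ∑ i, ∑ j, ρ i j * a h i * a h j : ℝ) : ℂ))) ∧
      Measure.map (fun z (i : Fin M) => z i ⬝ᵥ Q.mulVec (z i)) μZ =
        Measure.map (fun ξ (i : Fin M) => ∑ h, (ξ h i) ^ 2) μξ :=
  gaussian_quadratic_forms_law_general d r M Q hQsymm hQidem hQrank ρ μZ hμZ
end
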